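/- Let G ∈ K^{d×d} be Hermitian positive semidefinite and let D ∈ K^{d×n}. Then for every J ⊆ {1,…,n} with |J| ≤ s, every eigenvalue λ of the Hermitian matrix D_J* G D_J satisfies λ_min(G)·(1 − δ_s(D)) ≤ λ ≤ ‖G‖·(1 + δ_s(D)), where λ_min(G) is the smallest eigenvalue of G. Consequently, if δ_s(D) < 1, then θ_s(D*GD) ≤ max( ‖G‖·(1 + δ_s(D)) − 1, 1 − λ_min(G)·(1 − δ_s(D)) ). -/

import Mathlib

/-!
For an eigenpair `(λ, v)` of `D_J* G D_J` put `w = D_J v`. Then `λ ‖v‖² = ⟨w, G w⟩` lies between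
`λ_min(G) ‖w‖²` and `‖G‖ ‖w‖²`, while the restricted isometry property, applied to the zero
extension of `v` (an `s`-sparse vector with image `w`), gives
`(1 - δ_s) ‖v‖² ≤ ‖w‖² ≤ (1 + δ_s) ‖v‖²`; the infimum `δ_s` is itself admissible because the set
of admissible constants is closed.

For vectors `x, y` supported on `J`, `⟨y, D* G D x⟩ - ⟨y, x⟩ = ⟨y_J, (D_J* G D_J - I) x_J⟩`. The
Rayleigh quotient of a symmetric operator attains its extrema at eigenvectors, so the spectral
norm of the Hermitian matrix `D_J* G D_J - I` is at most the largest modulus of its eigenvalues,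
which the first part bounds by the maximum in the statement.
-/

open scoped BigOperators
open Matrix MeasureTheory

noncomputable section

namespace ObliquePursuit

variable {𝕜 : Type*} [RCLike 𝕜]

/-- The Euclidean (`ℓ²`) norm of a finitely indexed vector. -/
def l2 {ι : Type*} [Fintype ι] (x : ι → 𝕜) : ℝ :=
  Real.sqrt (∑ i, ‖x i‖ ^ 2)

/-- The spectral (`ℓ² → ℓ²` operator) norm of a matrix. -/
def specNorm {ι κ : Type*} [Fintype ι] [Fintype κ] [DecidableEq κ]
    (M : Matrix ι κ 𝕜) : ℝ :=
  ‖LinearMap.toContinuousLinearMap (Matrix.toEuclideanLin M)‖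

/-- `x` is `s`-sparse: it has at most `s` nonzero entries. -/
def Sparse {ι : Type*} (s : ℕ) (x : ι → 𝕜) : Prop :=
  ∃ J : Finset ι, J.card ≤ s ∧ ∀ i, x i ≠ 0 → i ∈ J

/-- The `s`-restricted biorthogonality constant `θ_s(M)`: the smallest `δ ≥ 0` such that
`|⟨y, Mx⟩ − ⟨y, x⟩| ≤ δ‖x‖₂‖y‖₂` for all `x, y` supported on a common index set of
cardinality at most `s`. -/
def theta {ι : Type*} [Fintype ι] (s : ℕ) (M : Matrix ι ι 𝕜) : ℝ :=
  sInf {δ : ℝ | 0 ≤ δ ∧ ∀ J : Finset ι, J.card ≤ s →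
    ∀ x y : ι → 𝕜, (∀ i, x i ≠ 0 → i ∈ J) → (∀ i, y i ≠ 0 → i ∈ J) →
      ‖star y ⬝ᵥ M.mulVec x - star y ⬝ᵥ x‖ ≤ δ * l2 x * l2 y}

/-- The `s`-restricted isometry constant `δ_s(Ψ)`. -/
def ric {ι κ : Type*} [Fintype ι] [Fintype κ] (s : ℕ) (Ψ : Matrix ι κ 𝕜) : ℝ :=
  sInf {δ : ℝ | 0 ≤ δ ∧ ∀ x : κ → 𝕜, Sparse s x →
    (1 - δ) * l2 x ^ 2 ≤ l2 (Ψ.mulVec x) ^ 2 ∧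
      l2 (Ψ.mulVec x) ^ 2 ≤ (1 + δ) * l2 x ^ 2}

/-- Coordinate projection `Π_J`: keep the entries indexed by `J`, zero out the others. -/
def proj {ι : Type*} [DecidableEq ι] (J : Finset ι) (x : ι → 𝕜) : ι → 𝕜 :=
  fun i => if i ∈ J then x i else 0

/-- The column submatrix `Ψ_J` of `Ψ` formed by the columns indexed by `J`. -/
def cols {ι κ : Type*} (Ψ : Matrix ι κ 𝕜) (J : Finset κ) :
    Matrix ι {j // j ∈ J} 𝕜 :=
  Ψ.submatrix id fun j => (j : κ)

/-- The `j`-th column of `Ψ`. -/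
def col {ι κ : Type*} (Ψ : Matrix ι κ 𝕜) (j : κ) : ι → 𝕜 :=
  fun i => Ψ i j

/-- The complementary oblique projector `E = I − Ψ_J (Ψ̃_J^* Ψ_J)⁻¹ Ψ̃_J^*`
(equal to `I` when `J = ∅`). -/
def obliqueE {ι κ : Type*} [Fintype ι] [DecidableEq ι] [DecidableEq κ]
    (Ψ Ψt : Matrix ι κ 𝕜) (J : Finset κ) : Matrix ι ι 𝕜 :=
  1 - cols Ψ J * ((cols Ψt J)ᴴ * cols Ψ J)⁻¹ * (cols Ψt J)ᴴ

/-- The smallest (real) eigenvalue of a matrix. -/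
def lamMin {ι : Type*} [Fintype ι] (G : Matrix ι ι 𝕜) : ℝ :=
  sInf {r : ℝ | ∃ v : ι → 𝕜, v ≠ 0 ∧ G.mulVec v = (r : 𝕜) • v}

/-- The `j`-th largest singular value (1-indexed) of a matrix, characterized via the
Eckart–Young–Mirsky theorem: `σ_j(A) = min { ‖A − B‖ : rank B < j }` where `‖·‖` is the
spectral norm. -/
def singVal {ι κ : Type*} [Fintype ι] [Fintype κ] [DecidableEq κ]
    (A : Matrix ι κ 𝕜) (j : ℕ) : ℝ :=
  sInf {r : ℝ | ∃ B : Matrix ι κ 𝕜, B.rank < j ∧ r = specNorm (A - B)}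

section SymmetricOperator

variable {E : Type*} [NormedAddCommGroup E] [InnerProductSpace 𝕜 E] [FiniteDimensional 𝕜 E]

local notation "⟪" x ", " y "⟫" => inner 𝕜 x y

theorem _root_.LinearMap.IsSymmetric.le_re_inner_map_self {T : E →ₗ[𝕜] E} (hT : T.IsSymmetric)
    {a : ℝ} (ha : ∀ μ : ℝ, Module.End.HasEigenvalue T μ → a ≤ μ) (x : E) :
    a * ‖x‖ ^ 2 ≤ RCLike.re ⟪T x, x⟫ := by
  rcases eq_or_ne x 0 with rfl | hx
  · simp
  have : Nontrivial E := ⟨⟨x, 0, hx⟩⟩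
  have hbdd : BddBelow (Set.range fun y : {y : E // y ≠ 0} ↦
      RCLike.re ⟪T y, y⟫ / ‖(y : E)‖ ^ 2) :=
    ⟨-‖LinearMap.toContinuousLinearMap T‖, Set.forall_mem_range.2 fun y ↦
      (abs_le.1 ((LinearMap.toContinuousLinearMap T).rayleighQuotient_le_norm y)).1⟩
  have := (ha _ hT.hasEigenvalue_iInf_of_finiteDimensional).trans (ciInf_le hbdd ⟨x, hx⟩)
  rwa [le_div_iff₀ (by positivity)] at this

theorem _root_.LinearMap.IsSymmetric.re_inner_map_self_le {T : E →ₗ[𝕜] E} (hT : T.IsSymmetric)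
    {b : ℝ} (hb : ∀ μ : ℝ, Module.End.HasEigenvalue T μ → μ ≤ b) (x : E) :
    RCLike.re ⟪T x, x⟫ ≤ b * ‖x‖ ^ 2 := by
  have hneg : (-T).IsSymmetric := fun x y ↦ by simp [hT x y]
  have := hneg.le_re_inner_map_self (a := -b) (fun μ hμ ↦ by
    rw [Module.End.hasEigenvalue_neg_iff, ← RCLike.ofReal_neg] at hμ
    linarith [hb _ hμ]) x
  simp only [LinearMap.neg_apply, inner_neg_left, map_neg] at this
  linarith

theorem _root_.ContinuousLinearMap.norm_le_of_forall_hasEigenvalue {T : E →L[𝕜] E}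
    (hT : (T : E →ₗ[𝕜] E).IsSymmetric) {B : ℝ} (hB : 0 ≤ B)
    (h : ∀ μ : ℝ, Module.End.HasEigenvalue (T : E →ₗ[𝕜] E) μ → |μ| ≤ B) : ‖T‖ ≤ B := by
  rw [T.norm_eq_iSup_rayleighQuotient hT]
  refine ciSup_le fun x ↦ ?_
  rcases eq_or_ne x 0 with rfl | hx
  · simpa using hB
  have hx2 : 0 < ‖x‖ ^ 2 := by positivity
  rw [abs_le, le_div_iff₀ hx2, div_le_iff₀ hx2, ContinuousLinearMap.reApplyInnerSelf_apply]
  exact ⟨by simpa using hT.le_re_inner_map_self (fun μ hμ ↦ neg_le_of_abs_le (h μ hμ)) x,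
    hT.re_inner_map_self_le (fun μ hμ ↦ le_of_abs_le (h μ hμ)) x⟩

end SymmetricOperator

section MatrixBounds

variable {ι κ : Type*} [Fintype ι] [Fintype κ]

theorem l2_eq_norm (x : ι → 𝕜) : l2 x = ‖WithLp.toLp 2 x‖ := by
  rw [l2, EuclideanSpace.norm_eq]

theorem l2_nonneg (x : ι → 𝕜) : 0 ≤ l2 x :=
  Real.sqrt_nonneg _

theorem l2_pos {v : ι → 𝕜} (hv : v ≠ 0) : 0 < l2 v := by
  rw [l2_eq_norm, norm_pos_iff]
  exact fun h ↦ hv (congrArg WithLp.ofLp h)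

theorem star_dotProduct_mulVec_eq_inner [DecidableEq κ] (M : Matrix ι κ 𝕜) (x : κ → 𝕜)
    (y : ι → 𝕜) :
    star y ⬝ᵥ M *ᵥ x = inner 𝕜 (WithLp.toLp 2 y) (toEuclideanLin M (WithLp.toLp 2 x)) :=
  dotProduct_comm _ _

theorem star_dotProduct_conjTranspose_mul_mul_mulVec (B : Matrix ι κ 𝕜) (G : Matrix ι ι 𝕜)
    (x y : κ → 𝕜) : star y ⬝ᵥ (Bᴴ * G * B) *ᵥ x = star (B *ᵥ y) ⬝ᵥ G *ᵥ (B *ᵥ x) := by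
  rw [Matrix.mul_assoc, ← mulVec_mulVec, ← mulVec_mulVec, dotProduct_mulVec, ← star_mulVec]

theorem l2_mulVec_le [DecidableEq κ] (M : Matrix ι κ 𝕜) (x : κ → 𝕜) :
    l2 (M *ᵥ x) ≤ specNorm M * l2 x := by
  rw [l2_eq_norm, l2_eq_norm]
  exact (LinearMap.toContinuousLinearMap (toEuclideanLin M)).le_opNorm _

theorem norm_star_dotProduct_mulVec_le [DecidableEq κ] (M : Matrix ι κ 𝕜) (x : κ → 𝕜)
    (y : ι → 𝕜) : ‖star y ⬝ᵥ M *ᵥ x‖ ≤ specNorm M * l2 x * l2 y :=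
  calc ‖star y ⬝ᵥ M *ᵥ x‖ ≤ l2 y * l2 (M *ᵥ x) := by
        rw [star_dotProduct_mulVec_eq_inner, l2_eq_norm, l2_eq_norm]
        exact norm_inner_le_norm _ _
    _ ≤ l2 y * (specNorm M * l2 x) :=
        mul_le_mul_of_nonneg_left (l2_mulVec_le M x) (l2_nonneg y)
    _ = specNorm M * l2 x * l2 y := by ring

theorem re_star_dotProduct_mulVec_le [DecidableEq ι] (M : Matrix ι ι 𝕜) (x : ι → 𝕜) :
    RCLike.re (star x ⬝ᵥ M *ᵥ x) ≤ specNorm M * l2 x ^ 2 :=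
  (RCLike.re_le_norm _).trans <| by
    simpa [sq, mul_assoc] using norm_star_dotProduct_mulVec_le M x x

theorem re_star_dotProduct_mulVec_of_mulVec_eq_smul {M : Matrix ι ι 𝕜} {r : ℝ} {v : ι → 𝕜}
    (h : M *ᵥ v = (r : 𝕜) • v) : RCLike.re (star v ⬝ᵥ M *ᵥ v) = r * l2 v ^ 2 := by
  classical
  have hv : toEuclideanLin M (WithLp.toLp 2 v) = (r : 𝕜) • WithLp.toLp 2 v :=
    congrArg (WithLp.toLp 2) h
  rw [star_dotProduct_mulVec_eq_inner, hv, inner_smul_right, inner_self_eq_norm_sq_to_K,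
    ← l2_eq_norm]
  norm_cast

theorem eigenvalue_le_specNorm [DecidableEq ι] {M : Matrix ι ι 𝕜} {r : ℝ} {v : ι → 𝕜}
    (hv : v ≠ 0) (h : M *ᵥ v = (r : 𝕜) • v) : r ≤ specNorm M := by
  have := re_star_dotProduct_mulVec_le M v
  rw [re_star_dotProduct_mulVec_of_mulVec_eq_smul h] at this
  exact le_of_mul_le_mul_right this (pow_pos (l2_pos hv) 2)

theorem exists_mulVec_eq_smul_of_hasEigenvalue [DecidableEq ι] {M : Matrix ι ι 𝕜} {μ : 𝕜}
    (h : Module.End.HasEigenvalue (toEuclideanLin M) μ) : ∃ v ≠ 0, M *ᵥ v = μ • v := by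
  obtain ⟨w, hw⟩ := h.exists_hasEigenvector
  exact ⟨WithLp.ofLp w, by simpa using hw.2, congrArg WithLp.ofLp hw.apply_eq_smul⟩

theorem re_star_dotProduct_mulVec_eq_re_inner [DecidableEq ι] (M : Matrix ι ι 𝕜) (x : ι → 𝕜) :
    RCLike.re (star x ⬝ᵥ M *ᵥ x) =
      RCLike.re (inner 𝕜 (toEuclideanLin M (WithLp.toLp 2 x)) (WithLp.toLp 2 x)) := by
  rw [star_dotProduct_mulVec_eq_inner, inner_re_symm]

theorem _root_.Matrix.IsHermitian.le_re_star_dotProduct_mulVec {H : Matrix ι ι 𝕜}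
    (hH : H.IsHermitian) {a : ℝ}
    (ha : ∀ (r : ℝ) (v : ι → 𝕜), v ≠ 0 → H *ᵥ v = (r : 𝕜) • v → a ≤ r) (x : ι → 𝕜) :
    a * l2 x ^ 2 ≤ RCLike.re (star x ⬝ᵥ H *ᵥ x) := by
  classical
  rw [re_star_dotProduct_mulVec_eq_re_inner, l2_eq_norm]
  refine (isSymmetric_toEuclideanLin_iff.2 hH).le_re_inner_map_self (fun μ hμ ↦ ?_) _
  obtain ⟨v, hv, hμv⟩ := exists_mulVec_eq_smul_of_hasEigenvalue hμ
  exact ha μ v hv hμv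

theorem _root_.Matrix.IsHermitian.specNorm_le [DecidableEq ι] {H : Matrix ι ι 𝕜}
    (hH : H.IsHermitian) {B : ℝ} (hB : 0 ≤ B)
    (h : ∀ (r : ℝ) (v : ι → 𝕜), v ≠ 0 → H *ᵥ v = (r : 𝕜) • v → |r| ≤ B) :
    specNorm H ≤ B :=
  ContinuousLinearMap.norm_le_of_forall_hasEigenvalue (isSymmetric_toEuclideanLin_iff.2 hH) hB
    fun μ hμ ↦ by
      obtain ⟨v, hv, hμv⟩ := exists_mulVec_eq_smul_of_hasEigenvalue hμ
      exact h μ v hv hμv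

end MatrixBounds

section SmallestEigenvalue

open scoped ComplexOrder

variable {ι : Type*} [Fintype ι] {G : Matrix ι ι 𝕜}

theorem _root_.Matrix.PosSemidef.eigenvalue_nonneg (hG : G.PosSemidef) {r : ℝ} {v : ι → 𝕜}
    (hv : v ≠ 0) (h : G *ᵥ v = (r : 𝕜) • v) : 0 ≤ r := by
  have := hG.re_dotProduct_nonneg v
  rw [re_star_dotProduct_mulVec_of_mulVec_eq_smul h] at this
  exact le_of_mul_le_mul_right (by simpa using this) (pow_pos (l2_pos hv) 2)

theorem lamMin_le (hG : G.PosSemidef) {r : ℝ} {v : ι → 𝕜} (hv : v ≠ 0)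
    (h : G *ᵥ v = (r : 𝕜) • v) : lamMin G ≤ r :=
  csInf_le ⟨0, fun _ ⟨_, hu, hGu⟩ ↦ hG.eigenvalue_nonneg hu hGu⟩ ⟨v, hv, h⟩

theorem lamMin_nonneg (hG : G.PosSemidef) : 0 ≤ lamMin G :=
  Real.sInf_nonneg fun _ ⟨_, hu, hGu⟩ ↦ hG.eigenvalue_nonneg hu hGu

theorem lamMin_le_specNorm [DecidableEq ι] (hG : G.PosSemidef) : lamMin G ≤ specNorm G := by
  by_cases hne : ∃ (r : ℝ) (v : ι → 𝕜), v ≠ 0 ∧ G *ᵥ v = (r : 𝕜) • v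
  · obtain ⟨r, v, hv, h⟩ := hne
    exact (lamMin_le hG hv h).trans (eigenvalue_le_specNorm hv h)
  · have hempty : {r : ℝ | ∃ v : ι → 𝕜, v ≠ 0 ∧ G *ᵥ v = (r : 𝕜) • v} = ∅ :=
      Set.eq_empty_of_forall_notMem fun r hr ↦ hne ⟨r, hr⟩
    rw [lamMin, hempty, Real.sInf_empty]
    exact norm_nonneg _

theorem _root_.Matrix.PosSemidef.lamMin_mul_le_re (hG : G.PosSemidef) (x : ι → 𝕜) :
    lamMin G * l2 x ^ 2 ≤ RCLike.re (star x ⬝ᵥ G *ᵥ x) :=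
  hG.isHermitian.le_re_star_dotProduct_mulVec (fun _ _ hv h ↦ lamMin_le hG hv h) x

end SmallestEigenvalue

theorem ric_spec {ι κ : Type*} [Fintype ι] [Fintype κ] (s : ℕ) (Ψ : Matrix ι κ 𝕜) :
    0 ≤ ric s Ψ ∧ ∀ x : κ → 𝕜, Sparse s x →
      (1 - ric s Ψ) * l2 x ^ 2 ≤ l2 (Ψ *ᵥ x) ^ 2 ∧
        l2 (Ψ *ᵥ x) ^ 2 ≤ (1 + ric s Ψ) * l2 x ^ 2 := by
  classical
  have hclosed : IsClosed {δ : ℝ | 0 ≤ δ ∧ ∀ x : κ → 𝕜, Sparse s x →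
      (1 - δ) * l2 x ^ 2 ≤ l2 (Ψ *ᵥ x) ^ 2 ∧ l2 (Ψ *ᵥ x) ^ 2 ≤ (1 + δ) * l2 x ^ 2} := by
    simp only [Set.ofPred_and, Set.ofPred_forall]
    exact (isClosed_le continuous_const continuous_id).inter <| isClosed_iInter fun _ ↦
      isClosed_iInter fun _ ↦ (isClosed_le (by fun_prop) continuous_const).inter
        (isClosed_le continuous_const (by fun_prop))
  refine hclosed.csInf_mem ⟨specNorm Ψ ^ 2 + 1, by positivity, fun x _ ↦ ?_⟩
    ⟨0, fun _ hδ ↦ hδ.1⟩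
  have hΨx : l2 (Ψ *ᵥ x) ^ 2 ≤ (specNorm Ψ * l2 x) ^ 2 :=
    pow_le_pow_left₀ (l2_nonneg _) (l2_mulVec_le Ψ x) 2
  constructor <;> nlinarith [l2_nonneg x]

section Restriction

variable {ι κ : Type*}

theorem sum_coe_sort_eq_sum [Fintype κ] {M : Type*} [AddCommMonoid M] (J : Finset κ)
    {f : κ → M} (hf : ∀ i ∉ J, f i = 0) : ∑ j : J, f j = ∑ i, f i := by
  rw [Finset.sum_coe_sort]
  exact Fintype.sum_subset fun i hi ↦ by_contra fun h ↦ hi (hf i h)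

variable [DecidableEq κ]

def zeroExtend (J : Finset κ) (v : J → 𝕜) : κ → 𝕜 :=
  fun i ↦ if h : i ∈ J then v ⟨i, h⟩ else 0

variable {J : Finset κ}

@[simp]
theorem zeroExtend_coe (v : J → 𝕜) (j : J) : zeroExtend J v j = v j := by
  simp [zeroExtend]

theorem zeroExtend_of_notMem (v : J → 𝕜) {i : κ} (hi : i ∉ J) : zeroExtend J v i = 0 := by
  simp [zeroExtend, hi]

theorem sparse_zeroExtend {s : ℕ} (hJ : J.card ≤ s) (v : J → 𝕜) : Sparse s (zeroExtend J v) :=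
  ⟨J, hJ, fun _ hi ↦ by_contra fun h ↦ hi (zeroExtend_of_notMem v h)⟩

theorem exists_zeroExtend_eq {x : κ → 𝕜} (hx : ∀ i, x i ≠ 0 → i ∈ J) :
    ∃ v, zeroExtend J v = x := by
  refine ⟨fun j ↦ x j, funext fun i ↦ ?_⟩
  by_cases hi : i ∈ J
  · exact zeroExtend_coe _ ⟨i, hi⟩
  · rw [zeroExtend_of_notMem _ hi]
    exact (not_imp_comm.1 (hx i) hi).symm

theorem l2_zeroExtend [Fintype κ] (v : J → 𝕜) : l2 (zeroExtend J v) = l2 v := by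
  rw [l2, l2, ← sum_coe_sort_eq_sum J fun i hi ↦ by simp [zeroExtend_of_notMem v hi]]
  simp

theorem mulVec_zeroExtend [Fintype κ] (Ψ : Matrix ι κ 𝕜) (v : J → 𝕜) :
    Ψ *ᵥ zeroExtend J v = cols Ψ J *ᵥ v := by
  ext i
  rw [mulVec, dotProduct, ← sum_coe_sort_eq_sum J fun j hj ↦ by simp [zeroExtend_of_notMem v hj]]
  simp [cols, mulVec, dotProduct]

theorem star_zeroExtend_dotProduct_mulVec_zeroExtend [Fintype κ] (M : Matrix κ κ 𝕜)
    (x y : J → 𝕜) :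
    star (zeroExtend J y) ⬝ᵥ M *ᵥ zeroExtend J x = star y ⬝ᵥ M.submatrix (↑) (↑) *ᵥ x := by
  rw [mulVec_zeroExtend, dotProduct,
    ← sum_coe_sort_eq_sum J fun j hj ↦ by simp [zeroExtend_of_notMem y hj]]
  simp [dotProduct, cols, mulVec]

theorem submatrix_gram_sub_one [Fintype ι] (Ψ : Matrix ι κ 𝕜) (G : Matrix ι ι 𝕜) :
    (Ψᴴ * G * Ψ - 1).submatrix ((↑) : J → κ) (↑) = (cols Ψ J)ᴴ * G * cols Ψ J - 1 := by
  change (Ψᴴ * G * Ψ).submatrix (Subtype.val : J → κ) Subtype.val -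
    (1 : Matrix κ κ 𝕜).submatrix (Subtype.val : J → κ) Subtype.val = _
  rw [submatrix_one _ Subtype.val_injective, submatrix_mul _ _ _ id _ Function.bijective_id,
    submatrix_mul _ _ _ id _ Function.bijective_id, submatrix_id_id]
  rfl

end Restriction

section GramBounds

open scoped ComplexOrder

variable {ι κ : Type*} [Fintype ι] [DecidableEq ι] [Fintype κ] [DecidableEq κ]
  {G : Matrix ι ι 𝕜}

theorem gram_eigenvalue_bounds (hG : G.PosSemidef) (Ψ : Matrix ι κ 𝕜) {s : ℕ} {J : Finset κ}
    (hJ : J.card ≤ s) {lam : ℝ} {v : J → 𝕜} (hv : v ≠ 0)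
    (h : ((cols Ψ J)ᴴ * G * cols Ψ J) *ᵥ v = (lam : 𝕜) • v) :
    lamMin G * (1 - ric s Ψ) ≤ lam ∧ lam ≤ specNorm G * (1 + ric s Ψ) := by
  set w := cols Ψ J *ᵥ v
  have hquad : RCLike.re (star w ⬝ᵥ G *ᵥ w) = lam * l2 v ^ 2 := by
    rw [← star_dotProduct_conjTranspose_mul_mul_mulVec,
      re_star_dotProduct_mulVec_of_mulVec_eq_smul h]
  have hw := (ric_spec s Ψ).2 _ (sparse_zeroExtend hJ v)
  rw [mulVec_zeroExtend, l2_zeroExtend] at hw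
  have hv2 : 0 < l2 v ^ 2 := pow_pos (l2_pos hv) 2
  constructor
  · refine le_of_mul_le_mul_right ?_ hv2
    calc lamMin G * (1 - ric s Ψ) * l2 v ^ 2 ≤ lamMin G * l2 w ^ 2 := by
          rw [mul_assoc]; exact mul_le_mul_of_nonneg_left hw.1 (lamMin_nonneg hG)
      _ ≤ lam * l2 v ^ 2 := hquad ▸ hG.lamMin_mul_le_re w
  · refine le_of_mul_le_mul_right ?_ hv2
    calc lam * l2 v ^ 2 ≤ specNorm G * l2 w ^ 2 := hquad ▸ re_star_dotProduct_mulVec_le G w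
      _ ≤ specNorm G * (1 + ric s Ψ) * l2 v ^ 2 := by
          rw [mul_assoc]; exact mul_le_mul_of_nonneg_left hw.2 (norm_nonneg _)

theorem theta_gram_le (hG : G.PosSemidef) (Ψ : Matrix ι κ 𝕜) (s : ℕ) :
    theta s (Ψᴴ * G * Ψ) ≤
      max (specNorm G * (1 + ric s Ψ) - 1) (1 - lamMin G * (1 - ric s Ψ)) := by
  set B := max (specNorm G * (1 + ric s Ψ) - 1) (1 - lamMin G * (1 - ric s Ψ))
  have hB₁ : specNorm G * (1 + ric s Ψ) - 1 ≤ B := le_max_left _ _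
  have hB₂ : 1 - lamMin G * (1 - ric s Ψ) ≤ B := le_max_right _ _
  have hB : 0 ≤ B := by
    -- the two entries of the maximum add up to `‖G‖ (1 + δ) - λ_min(G) (1 - δ) ≥ 0`
    have := lamMin_le_specNorm hG
    have := lamMin_nonneg hG
    have := (ric_spec s Ψ).1
    nlinarith
  refine csInf_le ⟨0, fun _ hδ ↦ hδ.1⟩ ⟨hB, fun J hJ x y hx hy ↦ ?_⟩
  obtain ⟨x, rfl⟩ := exists_zeroExtend_eq hx
  obtain ⟨y, rfl⟩ := exists_zeroExtend_eq hy
  set A := (cols Ψ J)ᴴ * G * cols Ψ J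
  have hA : (A - 1).IsHermitian :=
    (hG.conjTranspose_mul_mul_same _).isHermitian.sub isHermitian_one
  have hAB : specNorm (A - 1) ≤ B := hA.specNorm_le hB fun r u hu h ↦ by
    have hAu : A *ᵥ u = ((r + 1 : ℝ) : 𝕜) • u := by
      rw [sub_mulVec, one_mulVec, sub_eq_iff_eq_add] at h
      rw [h]; push_cast; module
    obtain ⟨hlo, hhi⟩ := gram_eigenvalue_bounds hG Ψ hJ hu hAu
    exact abs_le.2 ⟨by linarith, by linarith⟩
  calc ‖star (zeroExtend J y) ⬝ᵥ (Ψᴴ * G * Ψ) *ᵥ zeroExtend J x -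
        star (zeroExtend J y) ⬝ᵥ zeroExtend J x‖
      = ‖star y ⬝ᵥ (A - 1) *ᵥ x‖ := by
        rw [← submatrix_gram_sub_one, ← star_zeroExtend_dotProduct_mulVec_zeroExtend,
          sub_mulVec, one_mulVec, dotProduct_sub]
    _ ≤ specNorm (A - 1) * l2 x * l2 y := norm_star_dotProduct_mulVec_le _ _ _
    _ ≤ B * l2 (zeroExtend J x) * l2 (zeroExtend J y) := by
        rw [l2_zeroExtend, l2_zeroExtend]
        exact mul_le_mul_of_nonneg_right (mul_le_mul_of_nonneg_right hAB (l2_nonneg _))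
          (l2_nonneg _)

end GramBounds

open scoped ComplexOrder in
/-- eigenvalue bounds for `D_J^* G D_J` and the resulting bound on
`θ_s(D^* G D)`. -/
theorem statement18 (d n s : ℕ) (G : Matrix (Fin d) (Fin d) 𝕜) (hG : G.PosSemidef)
    (D : Matrix (Fin d) (Fin n) 𝕜) :
    (∀ J : Finset (Fin n), J.card ≤ s →
      ∀ (lam : ℝ) (v : {i // i ∈ J} → 𝕜), v ≠ 0 →
        ((cols D J)ᴴ * G * cols D J).mulVec v = (lam : 𝕜) • v →
        lamMin G * (1 - ric s D) ≤ lam ∧ lam ≤ specNorm G * (1 + ric s D)) ∧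
      (ric s D < 1 →
        theta s (Dᴴ * G * D) ≤
          max (specNorm G * (1 + ric s D) - 1) (1 - lamMin G * (1 - ric s D))) :=
  ⟨fun _ hJ _ _ hv h ↦ gram_eigenvalue_bounds hG D hJ hv h, fun _ ↦ theta_gram_le hG D s⟩
end ObliquePursuit
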